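/- arXiv:0708.3301 — 2 statements merged into one kernel-verified Lean document; each statement's English description precedes it below -/
import Mathlib

section
/- For every natural number n ≥ 1, Bₙ = (2·n!)/(π·e) · ∫₀^π exp(e^{cos θ} cos(sin θ)) · sin(e^{cos θ} sin(sin θ)) · sin(nθ) dθ, where Bₙ is the n-th Bell number. -/
/-!
Summing `exp (m w) / m!` over `m` in two orders gives the exponential generating function
`exp (exp w) = e * ∑ₖ Bₖ wᵏ / k!`: the inner sums over `m` are Dobinski's formula
`∑ₘ mᵏ / m! = e * Bₖ`. At `w = e^{iθ}` its imaginary part is the integrand's first factor,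
whose sine series `∑ₖ e Bₖ / k! * sin (kθ)` converges absolutely, so integrating it against
`sin (nθ)` over `[0, π]` extracts the coefficient `π / 2 * e Bₙ / n!` by orthogonality.
-/

/-- Stirling numbers of the second kind. -/
def stirling : ℕ → ℕ → ℕ
  | 0, 0 => 1
  | 0, _ + 1 => 0
  | _ + 1, 0 => 0
  | n + 1, k + 1 => (k + 1) * stirling n (k + 1) + stirling n k

/-- Bell numbers, via the standard recurrence. -/
def bell : ℕ → ℕ
  | 0 => 1
  | n + 1 => ∑ k ∈ (Finset.range (n + 1)).attach, Nat.choose n k.1 * bell k.1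
decreasing_by exact Finset.mem_range.mp k.2

open Real

open Finset
open scoped Nat

theorem bell_succ (n : ℕ) :
    bell (n + 1) = ∑ k ∈ range (n + 1), n.choose k * bell k := by
  rw [bell]
  exact sum_attach (range (n + 1)) fun k => n.choose k * bell k

theorem Real.hasSum_pow_div_factorial (x : ℝ) :
    HasSum (fun m : ℕ => x ^ m / m !) (Real.exp x) := by
  rw [Real.exp_eq_exp_ℝ]
  exact NormedSpace.expSeries_div_hasSum_exp x

theorem Complex.hasSum_pow_div_factorial (z : ℂ) :
    HasSum (fun m : ℕ => z ^ m / m !) (Complex.exp z) := by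
  rw [Complex.exp_eq_exp_ℂ]
  exact NormedSpace.expSeries_div_hasSum_exp z

theorem succ_pow_succ_div_factorial_succ (n m : ℕ) :
    ((m : ℝ) + 1) ^ (n + 1) / (m + 1)! =
      ∑ k ∈ range (n + 1), n.choose k * ((m : ℝ) ^ k / m !) := by
  have hm : (m : ℝ) + 1 ≠ 0 := by positivity
  rw [Nat.factorial_succ, Nat.cast_mul, Nat.cast_succ, pow_succ, mul_comm _ ((m : ℝ) + 1),
    mul_div_mul_left _ _ hm, add_pow, sum_div]
  exact sum_congr rfl fun k _ => by rw [one_pow, mul_one]; ring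

/-- Dobinski's formula. -/
theorem hasSum_pow_div_factorial_bell (n : ℕ) :
    HasSum (fun m : ℕ => (m : ℝ) ^ n / m !) (Real.exp 1 * bell n) := by
  induction n using Nat.strong_induction_on with
  | _ n ih =>
  cases n with
  | zero => simpa [bell] using Real.hasSum_pow_div_factorial 1
  | succ n =>
    have hb : Real.exp 1 * bell (n + 1) =
        ∑ k ∈ range (n + 1), n.choose k * (Real.exp 1 * bell k) := by
      rw [bell_succ]
      push_cast
      rw [mul_sum]
      exact sum_congr rfl fun k _ => by ring
    rw [← hasSum_nat_add_iff' 1]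
    simpa [succ_pow_succ_div_factorial_succ, hb] using
      hasSum_sum fun k hk => (ih k (mem_range.1 hk)).mul_left (n.choose k : ℝ)

theorem hasSum_exp_mul_bell_mul_pow_div_factorial (w : ℂ) :
    HasSum (fun k : ℕ => Real.exp 1 * bell k * w ^ k / k !) (Complex.exp (Complex.exp w)) := by
  set f : ℕ → ℕ → ℂ := fun m k => (m : ℂ) ^ k / m ! * (w ^ k / k !)
  have hnorm : ∀ m : ℕ, HasSum (fun k => ‖f m k‖) (Real.exp ‖w‖ ^ m / m !) := by
    intro m
    rw [← Real.exp_nat_mul]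
    refine ((Real.hasSum_pow_div_factorial (m * ‖w‖)).div_const (m ! : ℝ)).congr_fun fun k => ?_
    simp only [f, norm_mul, norm_div, norm_pow, Complex.norm_natCast, mul_pow]
    ring
  have hsum : Summable (Function.uncurry f) := by
    refine Summable.of_norm ((summable_prod_of_nonneg fun _ => norm_nonneg _).2 ⟨?_, ?_⟩)
    · exact fun m => (hnorm m).summable
    · simpa only [Function.uncurry_apply_pair, (hnorm _).tsum_eq] using
        Real.summable_pow_div_factorial (Real.exp ‖w‖)
  have hrow : ∀ m : ℕ, ∑' k, f m k = Complex.exp w ^ m / m ! := by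
    intro m
    rw [← Complex.exp_nat_mul, ← ((Complex.hasSum_pow_div_factorial (m * w)).div_const _).tsum_eq]
    exact tsum_congr fun k => by rw [mul_pow]; ring
  have hcol : ∀ k : ℕ, ∑' m, f m k = Real.exp 1 * bell k * w ^ k / k ! := by
    intro k
    have h := Complex.hasSum_ofReal.2 (hasSum_pow_div_factorial_bell k)
    push_cast at h
    rw [tsum_mul_right, h.tsum_eq]
    push_cast
    ring
  have h : HasSum (fun k => ∑' m, f m k) (∑' k, ∑' m, f m k) := hsum.prod_symm.prod.hasSum
  rw [hsum.tsum_comm, tsum_congr hrow, (Complex.hasSum_pow_div_factorial _).tsum_eq] at h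
  simpa only [hcol] using h

theorem integral_cos_int_mul (j : ℤ) :
    ∫ θ in (0 : ℝ)..π, cos (j * θ) = if j = 0 then π else 0 := by
  split_ifs with hj
  · simp [hj]
  · have hj' : (j : ℝ) ≠ 0 := by exact_mod_cast hj
    rw [intervalIntegral.integral_comp_mul_left (fun x => cos x) hj', integral_cos]
    simp [sin_int_mul_pi]

theorem integral_sin_nat_mul_mul_sin_nat_mul (k : ℕ) {n : ℕ} (hn : n ≠ 0) :
    ∫ θ in (0 : ℝ)..π, sin (k * θ) * sin (n * θ) = if k = n then π / 2 else 0 := by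
  have h : ∀ θ : ℝ, sin (k * θ) * sin (n * θ) =
      (cos (((k - n : ℤ) : ℝ) * θ) - cos (((k + n : ℤ) : ℝ) * θ)) / 2 := by
    intro θ
    push_cast
    rw [sub_mul, add_mul, cos_sub, cos_add]
    ring
  have hint : ∀ j : ℤ, IntervalIntegrable (fun θ : ℝ => cos (j * θ)) MeasureTheory.volume 0 π :=
    fun j => (continuous_cos.comp (continuous_const.mul continuous_id)).intervalIntegrable 0 π
  simp_rw [h]
  rw [intervalIntegral.integral_div, intervalIntegral.integral_sub (hint _) (hint _),
    integral_cos_int_mul, integral_cos_int_mul]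
  split_ifs <;> first | omega | ring

theorem integral_mul_sin_nat_mul_of_hasSum {a : ℕ → ℝ} {f : ℝ → ℝ}
    (ha : Summable fun k => |a k|) (hf : ∀ θ, HasSum (fun k : ℕ => a k * sin (k * θ)) (f θ))
    {n : ℕ} (hn : n ≠ 0) :
    ∫ θ in (0 : ℝ)..π, f θ * sin (n * θ) = π / 2 * a n := by
  have H : HasSum (fun k : ℕ => ∫ θ in (0 : ℝ)..π, a k * sin (k * θ) * sin (n * θ))
      (∫ θ in (0 : ℝ)..π, f θ * sin (n * θ)) := by
    refine intervalIntegral.hasSum_integral_of_dominated_convergence (fun k _ => |a k|)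
      (fun k => by fun_prop) (fun k => ?_) (by simp [ha]) intervalIntegrable_const
      (by simp [fun θ => (hf θ).mul_right (sin (n * θ))])
    refine MeasureTheory.ae_of_all _ fun θ _ => ?_
    rw [norm_mul, norm_mul, Real.norm_eq_abs]
    calc |a k| * ‖sin (k * θ)‖ * ‖sin (n * θ)‖ ≤ |a k| * 1 * 1 := by
          gcongr <;> exact abs_sin_le_one _
      _ = |a k| := by ring
  refine H.unique ((hasSum_ite_eq n (π / 2 * a n)).congr_fun fun k => ?_)
  simp_rw [mul_assoc]
  rw [intervalIntegral.integral_const_mul, integral_sin_nat_mul_mul_sin_nat_mul k hn]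
  split_ifs with hk
  · rw [hk, mul_comm]
  · rw [mul_zero]

theorem hasSum_exp_mul_bell_div_factorial_mul_sin (θ : ℝ) :
    HasSum (fun k : ℕ => Real.exp 1 * bell k / k ! * sin (k * θ))
      (Real.exp (Real.exp (cos θ) * cos (sin θ)) * sin (Real.exp (cos θ) * sin (sin θ))) := by
  have h := Complex.hasSum_im
    (hasSum_exp_mul_bell_mul_pow_div_factorial (Complex.exp (θ * Complex.I)))
  refine (h.congr_fun fun k => ?_).trans_eq ?_
  · have hk : Real.exp 1 * bell k * Complex.exp (θ * Complex.I) ^ k / k ! =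
        ((Real.exp 1 * bell k / k ! : ℝ) : ℂ) * Complex.exp ((k * θ : ℝ) * Complex.I) := by
      rw [← Complex.exp_nat_mul]
      push_cast
      ring_nf
    rw [hk, Complex.im_ofReal_mul, Complex.exp_ofReal_mul_I_im]
  · simp [Complex.exp_im, Complex.exp_re]

theorem summable_exp_mul_bell_div_factorial :
    Summable fun k : ℕ => Real.exp 1 * bell k / k ! := by
  have h := (hasSum_exp_mul_bell_mul_pow_div_factorial 1).summable
  simp only [one_pow, mul_one] at h
  exact_mod_cast h

theorem cesaro_formula_real (n : ℕ) (hn : 1 ≤ n) :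
    (bell n : ℝ) =
      2 * Nat.factorial n / (π * Real.exp 1) *
        ∫ θ in (0:ℝ)..π,
          Real.exp (Real.exp (Real.cos θ) * Real.cos (Real.sin θ)) *
            Real.sin (Real.exp (Real.cos θ) * Real.sin (Real.sin θ)) * Real.sin (n * θ) := by
  rw [integral_mul_sin_nat_mul_of_hasSum summable_exp_mul_bell_div_factorial.abs
    hasSum_exp_mul_bell_div_factorial_mul_sin (by omega)]
  field_simp
end

section
/- For natural numbers n ≥ 1, summing the identity Im(∫₀^π ((exp(e^{iθ})−1)^k/k!)·sin(nθ) dθ) = ({n choose k}/n!)·(π/2) over all k ≥ 0 and interchanging sum and integral yields Im(∫₀^π exp(exp(e^{iθ})−1)·sin(nθ) dθ) = (Bₙ/n!)·(π/2). -/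
open Real Complex
open scoped Nat

lemma two_pow_le_fact (j : ℕ) : (2:ℝ)^j ≤ 2 * j ! := by
  induction j with
  | zero => norm_num
  | succ j ih =>
    rcases Nat.eq_zero_or_pos j with h | h
    · subst h; norm_num
    · have hj : (1:ℝ) ≤ j := by exact_mod_cast h
      have h1 : (1:ℝ) ≤ j ! := by exact_mod_cast Nat.one_le_iff_ne_zero.mpr j.factorial_ne_zero
      rw [pow_succ, Nat.factorial_succ]
      push_cast
      nlinarith [ih]

lemma summable_pow_div_fact (N : ℕ) : Summable (fun j : ℕ => (j:ℝ)^N / j !) := by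
  refine Summable.of_nonneg_of_le (fun j => by positivity) (fun j => ?_)
    (((summable_pow_mul_geometric_of_norm_lt_one N (r := (1:ℝ)/2)
      (by norm_num)).mul_left 2))
  have h2 : (0:ℝ) < 2^j := by positivity
  have hf : (0:ℝ) < j ! := by exact_mod_cast j.factorial_pos
  have : (1:ℝ) / j ! ≤ 2 * (1/2)^j := by
    have hr : (2:ℝ) * (1/2)^j = 2 / 2^j := by rw [one_div, inv_pow]; ring
    rw [hr, div_le_div_iff₀ hf h2, one_mul]
    exact two_pow_le_fact j
  calc (j:ℝ)^N / j ! = (j:ℝ)^N * (1 / j !) := by ring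
    _ ≤ (j:ℝ)^N * (2 * (1/2)^j) := by
        exact mul_le_mul_of_nonneg_left this (by positivity)
    _ = 2 * ((j:ℝ)^N * (1/2)^j) := by ring

lemma rexp_tsum (x : ℝ) : Real.exp x = ∑' m : ℕ, x^m / m ! := by
  rw [Real.exp_eq_exp_ℝ, NormedSpace.exp_eq_tsum_div]

lemma cexp_tsum (z : ℂ) : Complex.exp z = ∑' m : ℕ, z^m / m ! := by
  rw [Complex.exp_eq_exp_ℂ, NormedSpace.exp_eq_tsum_div]

lemma dobinski (n : ℕ) : ∑' j : ℕ, (j:ℝ)^n / j ! = bell n * Real.exp 1 := by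
  induction n using Nat.strong_induction_on with
  | _ n ih =>
  match n with
  | 0 =>
    rw [rexp_tsum 1]
    simp [bell]
  | n+1 =>
    have h1 : ∑' j : ℕ, (j:ℝ)^(n+1) / j ! = ∑' j : ℕ, ((j:ℝ)+1)^n / j ! := by
      rw [Summable.tsum_eq_zero_add (summable_pow_div_fact (n+1))]
      have h0 : ((0:ℕ):ℝ)^(n+1) / (0:ℕ)! = 0 := by simp
      rw [h0, zero_add]
      refine tsum_congr fun j => ?_
      have hfs : ((j+1)! : ℝ) = (j+1) * j ! := by
        rw [Nat.factorial_succ]; push_cast; ring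
      have hj1 : ((j:ℝ)+1) ≠ 0 := by positivity
      push_cast
      rw [hfs, pow_succ]
      field_simp
    have h2 : ∀ j : ℕ, ((j:ℝ)+1)^n / j ! =
        ∑ k ∈ Finset.range (n+1), (n.choose k : ℝ) * ((j:ℝ)^k / j !) := by
      intro j
      rw [add_pow, Finset.sum_div]
      refine Finset.sum_congr rfl fun k hk => ?_
      ring
    rw [h1]
    simp_rw [h2]
    rw [Summable.tsum_finsetSum (fun k _ => (summable_pow_div_fact k).mul_left _)]
    have h3 : ∀ k ∈ Finset.range (n+1), ∑' j : ℕ, (n.choose k : ℝ) * ((j:ℝ)^k / j !)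
        = (n.choose k : ℝ) * (bell k * Real.exp 1) := by
      intro k hk
      rw [tsum_mul_left, ih k (Finset.mem_range.mp hk)]
    rw [Finset.sum_congr rfl h3]
    have hbell : (bell (n+1) : ℝ) = ∑ k ∈ Finset.range (n+1), (n.choose k : ℝ) * bell k := by
      rw [bell]
      push_cast
      rw [Finset.sum_attach (Finset.range (n+1)) (fun k => (n.choose k : ℝ) * bell k)]
    rw [hbell, Finset.sum_mul]
    exact Finset.sum_congr rfl fun k _ => by ring

lemma integral_cos_mul' (c : ℝ) (hc : c ≠ 0) :
    ∫ θ in (0:ℝ)..π, Real.cos (c*θ) = Real.sin (c*π) / c := by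
  rw [intervalIntegral.integral_comp_mul_left Real.cos hc]
  simp [integral_cos, smul_eq_mul, inv_mul_eq_div]

lemma sin_orth {m n : ℕ} (hn : 1 ≤ n) :
    ∫ θ in (0:ℝ)..π, Real.sin (m*θ) * Real.sin (n*θ) = if m = n then π/2 else 0 := by
  have key : ∀ θ:ℝ, Real.sin (m*θ) * Real.sin (n*θ)
      = (Real.cos (((m:ℝ)-n)*θ) - Real.cos (((m:ℝ)+n)*θ))/2 := by
    intro θ
    rw [sub_mul, add_mul, Real.cos_sub, Real.cos_add]
    ring
  have hint : ∀ c : ℝ, IntervalIntegrable (fun θ => Real.cos (c*θ)) MeasureTheory.volume 0 π :=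
    fun c => (Real.continuous_cos.comp (continuous_const.mul continuous_id)).intervalIntegrable 0 π
  simp_rw [key]
  rw [intervalIntegral.integral_div, intervalIntegral.integral_sub (hint _) (hint _)]
  have hmn : ((m:ℝ)+n) ≠ 0 := by
    have : (0:ℝ) < (m:ℝ)+n := by
      have : (1:ℝ) ≤ (n:ℝ) := by exact_mod_cast hn
      positivity
    linarith
  have hsin2 : Real.sin (((m:ℝ)+n)*π) = 0 := by
    have : ((m:ℝ)+n) = ((m+n : ℕ) : ℝ) := by push_cast; ring
    rw [this]
    exact Real.sin_nat_mul_pi (m+n)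
  rw [integral_cos_mul' _ hmn, hsin2, zero_div]
  by_cases h : m = n
  · subst h
    have : ((m:ℝ) - m) = 0 := by ring
    rw [this]
    simp
  · have hmn' : ((m:ℝ)-n) ≠ 0 := by
      intro hcon
      exact h (by exact_mod_cast sub_eq_zero.mp hcon)
    have hsin1 : Real.sin (((m:ℝ)-n)*π) = 0 := by
      have : ((m:ℝ)-n) = (((m:ℤ) - n : ℤ) : ℝ) := by push_cast; ring
      rw [this]
      exact Real.sin_int_mul_pi _
    rw [integral_cos_mul' _ hmn', hsin1, zero_div]
    simp [h]

lemma J_eval (m n : ℕ) (hn : 1 ≤ n) :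
    (∫ θ in (0:ℝ)..π, Complex.exp (m*(θ*I)) * (Real.sin (n*θ):ℂ)).im
      = if m = n then π/2 else 0 := by
  have key : ∀ θ : ℝ, Complex.exp (m*(θ*I)) * (Real.sin (n*θ):ℂ)
      = ((Real.cos (m*θ) * Real.sin (n*θ) : ℝ) : ℂ)
        + ((Real.sin (m*θ) * Real.sin (n*θ) : ℝ) : ℂ) * I := by
    intro θ
    have h1 : (m:ℂ)*(θ*I) = ((m*θ:ℝ):ℂ)*I := by push_cast; ring
    rw [h1, Complex.exp_mul_I, ← Complex.ofReal_cos, ← Complex.ofReal_sin]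
    push_cast
    ring
  simp_rw [key]
  have hu : IntervalIntegrable (fun θ => ((Real.cos (m*θ) * Real.sin (n*θ) : ℝ) : ℂ))
      MeasureTheory.volume 0 π := by
    apply Continuous.intervalIntegrable
    continuity
  have hv : IntervalIntegrable (fun θ => ((Real.sin (m*θ) * Real.sin (n*θ) : ℝ) : ℂ) * I)
      MeasureTheory.volume 0 π := by
    apply Continuous.intervalIntegrable
    continuity
  rw [intervalIntegral.integral_add hu hv, intervalIntegral.integral_mul_const,
    intervalIntegral.integral_ofReal, intervalIntegral.integral_ofReal]
  simp [sin_orth hn]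

noncomputable def S (p : ℕ × ℕ) : ℝ := (p.1:ℝ)^p.2 / (p.1 ! * p.2 !)

lemma summable_S_row (j : ℕ) : Summable (fun m => S (j, m)) :=
  ((Real.summable_pow_div_factorial (j:ℝ)).div_const (j !)).congr
      (fun m => by unfold S; rw [div_div, mul_comm ((m ! : ℝ))])

lemma summable_S : Summable S := by
  refine (summable_prod_of_nonneg (fun p => by unfold S; positivity)).2 ⟨summable_S_row, ?_⟩
  · have heq : ∀ j : ℕ, ∑' m : ℕ, S (j, m) = (Real.exp 1)^j / j ! := by
      intro j
      have h1 : ∀ m : ℕ, S (j, m) = ((j:ℝ)^m / m !) / j ! := by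
        intro m; unfold S; rw [div_div, mul_comm ((j ! : ℝ))]
      simp_rw [h1]
      rw [tsum_div_const, ← rexp_tsum (j:ℝ)]
      congr 1
      rw [← Real.exp_nat_mul, mul_one]
    exact ((Real.summable_pow_div_factorial (Real.exp 1)).congr
      (fun j => (heq j).symm))

lemma norm_term (p : ℕ × ℕ) (θ : ℝ) :
    ‖((p.1:ℂ) * Complex.exp (θ*I))^p.2 / (p.1 ! * p.2 !)‖ = S p := by
  obtain ⟨j, m⟩ := p
  rw [norm_div, norm_pow, norm_mul]
  rw [Complex.norm_exp_ofReal_mul_I, Complex.norm_natCast, mul_one]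
  unfold S
  congr 1
  rw [norm_mul, Complex.norm_natCast, Complex.norm_natCast]

lemma expansion (θ : ℝ) : Complex.exp (Complex.exp (Complex.exp (θ*I)) - 1)
    = Complex.exp (-1) * ∑' p : ℕ × ℕ, ((p.1:ℂ) * Complex.exp (θ*I))^p.2 / (p.1 ! * p.2 !) := by
  set w : ℂ := Complex.exp (θ*I) with hw
  have hF : Summable (fun p : ℕ × ℕ => ((p.1:ℂ) * w)^p.2 / (p.1 ! * p.2 !)) := by
    apply Summable.of_norm
    exact summable_S.congr (fun p => (norm_term p θ).symm)
  rw [sub_eq_add_neg, Complex.exp_add, mul_comm (Complex.exp (Complex.exp w))]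
  congr 1
  rw [Summable.tsum_prod' hF (fun j => Summable.of_norm ((summable_S_row j).congr
    (fun m => (norm_term (j, m) θ).symm)))]
  rw [cexp_tsum (Complex.exp w)]
  refine tsum_congr fun j => ?_
  rw [← Complex.exp_nat_mul w j, cexp_tsum ((j:ℂ) * w), ← tsum_div_const]
  refine tsum_congr fun m => ?_
  rw [div_div, mul_comm ((j ! : ℂ))]

theorem im_integral_exp_exp_sub_one (n : ℕ) (hn : 1 ≤ n) :
    (∫ θ in (0:ℝ)..π,
        Complex.exp (Complex.exp (Complex.exp (θ * Complex.I)) - 1) *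
          (Real.sin (n * θ) : ℂ)).im =
      (bell n : ℝ) / Nat.factorial n * (π / 2) := by
  classical
  set g : ℕ × ℕ → ℝ → ℂ := fun p θ =>
    ((p.1:ℂ) * Complex.exp (θ*I))^p.2 / (p.1 ! * p.2 !) * (Real.sin (n*θ) : ℂ) with hg
  have hpt : ∀ θ : ℝ,
      Complex.exp (Complex.exp (Complex.exp (θ*I)) - 1) * (Real.sin (n*θ):ℂ)
      = Complex.exp (-1) * ∑' p : ℕ×ℕ, g p θ := by
    intro θ
    rw [expansion θ, mul_assoc, ← tsum_mul_right]
  have hcont : ∀ p : ℕ×ℕ, Continuous (g p) := by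
    intro p
    refine Continuous.mul (Continuous.div_const (Continuous.pow ?_ _) _) ?_
    · exact continuous_const.mul (Complex.continuous_exp.comp
        (Complex.continuous_ofReal.mul continuous_const))
    · exact Complex.continuous_ofReal.comp
        (Real.continuous_sin.comp (continuous_const.mul continuous_id))
  have hSnn : ∀ p : ℕ×ℕ, 0 ≤ S p := fun p => by unfold S; positivity
  have hnorm : ∀ (p : ℕ×ℕ) (θ : ℝ), ‖g p θ‖ ≤ S p := by
    intro p θ
    rw [hg]
    simp only
    rw [norm_mul, norm_term p θ]
    have h1 : ‖(Real.sin (n*θ):ℂ)‖ ≤ 1 := by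
      rw [Complex.norm_real, Real.norm_eq_abs]
      exact Real.abs_sin_le_one _
    calc S p * ‖(Real.sin (n*θ):ℂ)‖ ≤ S p * 1 := mul_le_mul_of_nonneg_left h1 (hSnn p)
      _ = S p := mul_one _
  have hμ : (MeasureTheory.volume (Set.Ioc (0:ℝ) π)).toReal = π := by
    rw [Real.volume_Ioc, ENNReal.toReal_ofReal (by linarith [Real.pi_pos]), sub_zero]
  have hIbound : ∀ p : ℕ×ℕ, (∫ θ in Set.Ioc (0:ℝ) π, ‖g p θ‖) ≤ π * S p := by
    intro p
    calc (∫ θ in Set.Ioc (0:ℝ) π, ‖g p θ‖)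
        ≤ ∫ _ in Set.Ioc (0:ℝ) π, S p := by
          refine MeasureTheory.integral_mono_of_nonneg
            (Filter.Eventually.of_forall fun θ => norm_nonneg _)
            (MeasureTheory.integrableOn_const ?_)
            (Filter.Eventually.of_forall fun θ => hnorm p θ)
          rw [Real.volume_Ioc]; exact ENNReal.ofReal_ne_top
      _ = π * S p := by rw [MeasureTheory.setIntegral_const, smul_eq_mul, MeasureTheory.measureReal_def, hμ]
  have hint : ∀ p : ℕ×ℕ, MeasureTheory.IntegrableOn (g p) (Set.Ioc (0:ℝ) π) := fun p =>
    (hcont p).integrableOn_Ioc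
  have hsumnorm : Summable fun p : ℕ×ℕ => ∫ θ in Set.Ioc (0:ℝ) π, ‖g p θ‖ :=
    Summable.of_nonneg_of_le (fun p => MeasureTheory.integral_nonneg fun θ => norm_nonneg _)
      hIbound (summable_S.mul_left π)
  have hswap : (∫ θ in (0:ℝ)..π, ∑' p : ℕ×ℕ, g p θ)
      = ∑' p : ℕ×ℕ, ∫ θ in (0:ℝ)..π, g p θ := by
    rw [intervalIntegral.integral_of_le Real.pi_pos.le,
      ← MeasureTheory.integral_tsum_of_summable_integral_norm hint hsumnorm]
    exact tsum_congr fun p => (intervalIntegral.integral_of_le Real.pi_pos.le).symm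
  have hsumint : Summable fun p : ℕ×ℕ => ∫ θ in (0:ℝ)..π, g p θ := by
    refine Summable.of_norm_bounded hsumnorm (fun p => ?_)
    rw [intervalIntegral.integral_of_le Real.pi_pos.le]
    exact MeasureTheory.norm_integral_le_integral_norm _
  have him : ∀ p : ℕ×ℕ, (∫ θ in (0:ℝ)..π, g p θ).im
      = S p * (if p.2 = n then π/2 else 0) := by
    rintro ⟨j, m⟩
    have hrw : ∀ θ:ℝ, g (j,m) θ
        = (((j:ℝ)^m/(j ! * m !) : ℝ) : ℂ) * (Complex.exp (m*(θ*I)) * (Real.sin (n*θ):ℂ)) := by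
      intro θ
      rw [hg]
      simp only
      rw [mul_pow, ← Complex.exp_nat_mul]
      push_cast
      ring
    simp_rw [hrw]
    rw [intervalIntegral.integral_const_mul, Complex.im_ofReal_mul, J_eval m n hn]
    unfold S
    rfl
  simp_rw [hpt]
  rw [intervalIntegral.integral_const_mul, hswap]
  have hexpneg : Complex.exp (-1) = ((Real.exp (-1) : ℝ) : ℂ) := by
    rw [Complex.ofReal_exp]; norm_num
  rw [hexpneg, Complex.im_ofReal_mul]
  have htsum_im : (∑' p : ℕ×ℕ, ∫ θ in (0:ℝ)..π, g p θ).im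
      = ∑' p : ℕ×ℕ, (∫ θ in (0:ℝ)..π, g p θ).im := Complex.imCLM.map_tsum hsumint
  rw [htsum_im]
  simp_rw [him]
  have hsum2 : Summable fun p : ℕ×ℕ => S p * (if p.2 = n then π/2 else 0) := by
    refine Summable.of_nonneg_of_le (fun p => mul_nonneg (hSnn p) ?_) (fun p => ?_)
      (summable_S.mul_right (π/2))
    · split
      · positivity
      · exact le_refl 0
    · refine mul_le_mul_of_nonneg_left ?_ (hSnn p)
      split
      · exact le_refl _
      · positivity
  rw [Summable.tsum_prod' hsum2 (fun j => summable_of_ne_finset_zero (s := {n})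
      (fun m hm => by simp [Finset.mem_singleton.not.mp hm]))]
  have hinner : ∀ j : ℕ, ∑' m : ℕ, S (j, m) * (if (j, m).2 = n then π/2 else 0)
      = ((j:ℝ)^n / j !) * (π/2 / n !) := by
    intro j
    rw [tsum_eq_single n (fun m hm => by simp [hm])]
    unfold S
    simp only [if_pos]
    ring
  simp_rw [hinner]
  rw [tsum_mul_right, dobinski n]
  have hexp := Real.exp_ne_zero 1
  rw [show ((-1:ℝ)) = -(1:ℝ) by norm_num, Real.exp_neg]
  have hn' : ((n ! : ℕ) : ℝ) ≠ 0 := Nat.cast_ne_zero.mpr n.factorial_ne_zero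
  field_simp
end
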